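/- For a closed simplicial d-pseudomanifold M and any two facets F and F', the complex M - F is collapsible if and only if M - F' is collapsible. -/

import Mathlib

structure SC where
  faces : Finset (Finset ℕ)
  nonempty_mem : ∀ s ∈ faces, s.Nonempty
  down_closed : ∀ s ∈ faces, ∀ t ⊆ s, t.Nonempty → t ∈ faces

def SC.FreeFace (K : SC) (f : Finset ℕ) : Prop :=
  f ∈ K.faces ∧ ∃! F, F ∈ K.faces ∧ f ⊂ F

def SC.ElemCollapse (K K' : SC) : Prop :=
  ∃ f F, f ∈ K.faces ∧ F ∈ K.faces ∧ f ⊂ F ∧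
    (∀ G ∈ K.faces, f ⊂ G → G = F) ∧ K'.faces = (K.faces.erase f).erase F

def SC.CollapsesTo (K L : SC) : Prop := Relation.ReflTransGen SC.ElemCollapse K L

def pointSC (v : ℕ) : SC where
  faces := {{v}}
  nonempty_mem := by
    intro s hs; rw [Finset.mem_singleton] at hs; subst hs
    exact Finset.singleton_nonempty v
  down_closed := by
    intro s hs t ht hne
    rw [Finset.mem_singleton] at hs; subst hs
    rw [Finset.mem_singleton, ← hne.subset_singleton_iff]; exact ht

def SC.Collapsible (K : SC) : Prop := ∃ v, K.CollapsesTo (pointSC v)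

def SC.ExtendablyCollapsible (K : SC) : Prop :=
  K.Collapsible ∧ ∀ L : SC, K.CollapsesTo L → L.Collapsible

def SC.chi (K : SC) : ℤ := ∑ s ∈ K.faces, (-1 : ℤ) ^ (s.card - 1)

def SC.realization (K : SC) : Set (ℕ → ℝ) :=
  {x | ∃ s ∈ K.faces, (∀ i, x i ≠ 0 → i ∈ s) ∧ (∀ i, 0 ≤ x i) ∧ ∑ i ∈ s, x i = 1}

def generatedBy (F : Finset (Finset ℕ)) : SC where
  faces := F.sup fun s => s.powerset.filter Finset.Nonempty
  nonempty_mem := by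
    intro s hs
    rw [Finset.mem_sup] at hs
    obtain ⟨t, _, hst⟩ := hs
    exact (Finset.mem_filter.mp hst).2
  down_closed := by
    intro s hs t ht hne
    rw [Finset.mem_sup] at hs ⊢
    obtain ⟨u, hu, hsu⟩ := hs
    exact ⟨u, hu, Finset.mem_filter.mpr
      ⟨Finset.mem_powerset.mpr (ht.trans (Finset.mem_powerset.mp (Finset.mem_filter.mp hsu).1)), hne⟩⟩

/-- A single elementary collapse step, removing the free face `f` together with
the unique face `F` properly containing it. -/
def CollapseStep (K : SC) (f F : Finset ℕ) (K' : SC) : Prop :=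
  f ∈ K.faces ∧ F ∈ K.faces ∧ f ⊂ F ∧ (∀ G ∈ K.faces, f ⊂ G → G = F) ∧
    K'.faces = (K.faces.erase f).erase F

/-- A sequence of elementary collapses recorded by its list of removed pairs. -/
def CollapseSeq : SC → List (Finset ℕ × Finset ℕ) → SC → Prop
  | K, [], L => K = L
  | K, p :: rest, L => ∃ K' : SC, CollapseStep K p.1 p.2 K' ∧ CollapseSeq K' rest L

/-- The dual graph of a pure d-dimensional complex: vertices are the facets,
two facets being adjacent when they share a (d-1)-face. -/
def dualGraph (M : SC) (d : ℕ) :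
    SimpleGraph {A : Finset ℕ // A ∈ M.faces ∧ A.card = d + 1} where
  Adj A B := A ≠ B ∧ (A.1 ∩ B.1).card = d
  symm := ⟨by intro A B h; exact ⟨h.1.symm, by rw [Finset.inter_comm]; exact h.2⟩⟩
  loopless := ⟨by intro A h; exact h.1 rfl⟩


/- ====================== Auxiliary development ====================== -/

namespace PMAux

theorem scExt {K K' : SC} (h : K.faces = K'.faces) : K = K' := by
  cases K; cases K'; cases h; rfl

/-- facets of a pair-list. -/
def fc : List (Finset ℕ × Finset ℕ) → Finset (Finset ℕ)
  | [] => ∅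
  | p :: L => insert p.1 (fc L)

/-- ridges of a pair-list. -/
def rg : List (Finset ℕ × Finset ℕ) → Finset (Finset ℕ)
  | [] => ∅
  | p :: L => insert p.2 (rg L)

@[simp] lemma fc_nil : fc [] = ∅ := rfl
@[simp] lemma fc_cons (p : Finset ℕ × Finset ℕ) (L) : fc (p :: L) = insert p.1 (fc L) := rfl
@[simp] lemma rg_nil : rg [] = ∅ := rfl
@[simp] lemma rg_cons (p : Finset ℕ × Finset ℕ) (L) : rg (p :: L) = insert p.2 (rg L) := rfl

@[simp] lemma fc_append (L1 L2 : List (Finset ℕ × Finset ℕ)) :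
    fc (L1 ++ L2) = fc L1 ∪ fc L2 := by
  induction L1 with
  | nil => simp
  | cons p L ih => simp [ih, Finset.insert_union]

@[simp] lemma rg_append (L1 L2 : List (Finset ℕ × Finset ℕ)) :
    rg (L1 ++ L2) = rg L1 ∪ rg L2 := by
  induction L1 with
  | nil => simp
  | cons p L ih => simp [ih, Finset.insert_union]

lemma mem_fc {p : Finset ℕ × Finset ℕ} {L} (h : p ∈ L) : p.1 ∈ fc L := by
  induction L with
  | nil => simp at h
  | cons q L ih =>
    rcases List.mem_cons.mp h with h | h
    · subst h; simp
    · simp [ih h]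

/-- Rooted matching: each pair is a facet together with a ridge of it whose
other facet is already available. -/
def RM (M : SC) (d : ℕ) : Finset (Finset ℕ) → List (Finset ℕ × Finset ℕ) → Prop
  | _, [] => True
  | A, p :: L => p.1 ∈ M.faces ∧ p.1.card = d + 1 ∧ p.1 ∉ A ∧
      p.2 ∈ M.faces ∧ p.2.card = d ∧ p.2 ⊆ p.1 ∧ (∃ H ∈ A, p.2 ⊆ H) ∧
      RM M d (insert p.1 A) L

/-- Invariant on removed ridges. -/
def InvB (M : SC) (d : ℕ) (A B : Finset (Finset ℕ)) : Prop :=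
  ∀ r ∈ B, r ∈ M.faces ∧ r.card = d ∧ ∀ X ∈ M.faces, r ⊂ X → X ∈ A

section Basics

variable {M : SC} {d : ℕ}

lemma card_le_of_pure (hpure : ∀ s ∈ M.faces, ∃ F ∈ M.faces, s ⊆ F ∧ F.card = d + 1)
    {s : Finset ℕ} (hs : s ∈ M.faces) : s.card ≤ d + 1 := by
  obtain ⟨F, _, hsub, hcard⟩ := hpure s hs
  calc s.card ≤ F.card := Finset.card_le_card hsub
    _ = d + 1 := hcard

lemma coface_card (hpure : ∀ s ∈ M.faces, ∃ F ∈ M.faces, s ⊆ F ∧ F.card = d + 1)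
    {r X : Finset ℕ} (hr : r.card = d) (hX : X ∈ M.faces) (hss : r ⊂ X) :
    X.card = d + 1 := by
  have h1 : r.card < X.card := Finset.card_lt_card hss
  have h2 := card_le_of_pure hpure hX
  omega

lemma two_facets (hpm : ∀ r ∈ M.faces, r.card = d →
      (M.faces.filter fun G => G.card = d + 1 ∧ r ⊆ G).card = 2)
    {r G H : Finset ℕ} (hrM : r ∈ M.faces) (hr : r.card = d)
    (hG : G ∈ M.faces) (hGc : G.card = d + 1) (hrG : r ⊆ G)
    (hH : H ∈ M.faces) (hHc : H.card = d + 1) (hrH : r ⊆ H) (hne : G ≠ H)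
    {X : Finset ℕ} (hX : X ∈ M.faces) (hXc : X.card = d + 1) (hrX : r ⊆ X) :
    X = G ∨ X = H := by
  have hcard := hpm r hrM hr
  have hsub : ({G, H} : Finset (Finset ℕ)) ⊆
      M.faces.filter fun Y => Y.card = d + 1 ∧ r ⊆ Y := by
    intro Y hY
    simp only [Finset.mem_insert, Finset.mem_singleton] at hY
    rcases hY with rfl | rfl <;> simp [Finset.mem_filter, *]
  have hc2 : ({G, H} : Finset (Finset ℕ)).card = 2 := Finset.card_pair hne
  have heq : ({G, H} : Finset (Finset ℕ)) =
      M.faces.filter fun Y => Y.card = d + 1 ∧ r ⊆ Y :=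
    Finset.eq_of_subset_of_card_le hsub (by omega)
  have : X ∈ ({G, H} : Finset (Finset ℕ)) := by
    rw [heq]; simp [Finset.mem_filter, hX, hXc, hrX]
  simpa using this

lemma other_facet (hpm : ∀ r ∈ M.faces, r.card = d →
      (M.faces.filter fun G => G.card = d + 1 ∧ r ⊆ G).card = 2)
    {r G : Finset ℕ} (hrM : r ∈ M.faces) (hr : r.card = d)
    (hG : G ∈ M.faces) (hGc : G.card = d + 1) (hrG : r ⊆ G) :
    ∃ H, H ∈ M.faces ∧ H.card = d + 1 ∧ r ⊆ H ∧ H ≠ G := by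
  have hcard := hpm r hrM hr
  have hGmem : G ∈ M.faces.filter fun Y => Y.card = d + 1 ∧ r ⊆ Y := by
    simp [Finset.mem_filter, hG, hGc, hrG]
  have : ((M.faces.filter fun Y => Y.card = d + 1 ∧ r ⊆ Y).erase G).Nonempty := by
    rw [← Finset.card_pos, Finset.card_erase_of_mem hGmem, hcard]
    norm_num
  obtain ⟨H, hH⟩ := this
  have hne := Finset.ne_of_mem_erase hH
  have hH' := Finset.mem_of_mem_erase hH
  simp only [Finset.mem_filter] at hH'
  exact ⟨H, hH'.1, hH'.2.1, hH'.2.2, hne⟩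

/-- In any elementary collapse, the coface has exactly one more vertex. -/
lemma elem_card {K : SC} {f F : Finset ℕ} (hf : f ∈ K.faces) (hF : F ∈ K.faces)
    (hss : f ⊂ F) (huniq : ∀ G ∈ K.faces, f ⊂ G → G = F) : F.card = f.card + 1 := by
  obtain ⟨x, hxF, hxf⟩ := Finset.exists_of_ssubset hss
  have hg : insert x f ∈ K.faces :=
    K.down_closed F hF (insert x f) (Finset.insert_subset hxF hss.subset)
      (Finset.insert_nonempty x f)
  have := huniq (insert x f) hg (Finset.ssubset_insert hxf)
  rw [← this, Finset.card_insert_of_notMem hxf]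

end Basics


section RMLemmas

variable {M : SC} {d : ℕ}

lemma RM_mem {A : Finset (Finset ℕ)} {L} (h : RM M d A L) :
    ∀ p ∈ L, p.1 ∈ M.faces ∧ p.1.card = d + 1 ∧ p.2 ∈ M.faces ∧ p.2.card = d := by
  induction L generalizing A with
  | nil => simp
  | cons q L ih =>
    obtain ⟨h1, h2, h3, h4, h5, h6, h7, h8⟩ := h
    intro p hp
    rcases List.mem_cons.mp hp with rfl | hp
    · exact ⟨h1, h2, h4, h5⟩
    · exact ih h8 p hp

lemma RM_not_avail {A : Finset (Finset ℕ)} {L} (h : RM M d A L) :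
    ∀ p ∈ L, p.1 ∉ A := by
  induction L generalizing A with
  | nil => simp
  | cons q L ih =>
    obtain ⟨h1, h2, h3, h4, h5, h6, h7, h8⟩ := h
    intro p hp
    rcases List.mem_cons.mp hp with rfl | hp
    · exact h3
    · intro hpA
      exact ih h8 p hp (Finset.mem_insert_of_mem hpA)

lemma RM_mono {A A' : Finset (Finset ℕ)} {L} (hsub : A ⊆ A')
    (hdisj : ∀ p ∈ L, p.1 ∉ A') (h : RM M d A L) : RM M d A' L := by
  induction L generalizing A A' with
  | nil => trivial
  | cons q L ih =>
    obtain ⟨h1, h2, h3, h4, h5, h6, ⟨H, hHA, hH⟩, h8⟩ := h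
    refine ⟨h1, h2, hdisj q List.mem_cons_self, h4, h5, h6,
      ⟨H, hsub hHA, hH⟩, ?_⟩
    refine ih (Finset.insert_subset_insert _ hsub) ?_ h8
    intro p hp
    simp only [Finset.mem_insert]
    push_neg
    refine ⟨?_, hdisj p (List.mem_cons_of_mem q hp)⟩
    intro hpq
    have := RM_not_avail h8 p hp
    rw [hpq] at this
    exact this (Finset.mem_insert_self _ _)

lemma RM_append {A : Finset (Finset ℕ)} {L1 L2} :
    RM M d A (L1 ++ L2) ↔ RM M d A L1 ∧ RM M d (A ∪ fc L1) L2 := by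
  induction L1 generalizing A with
  | nil => simp [RM]
  | cons q L ih =>
    simp only [List.cons_append]
    show (_ ∧ _ ∧ _ ∧ _ ∧ _ ∧ _ ∧ _ ∧ RM M d _ (L ++ L2)) ↔ _
    rw [ih]
    constructor
    · rintro ⟨h1, h2, h3, h4, h5, h6, h7, h8, h9⟩
      refine ⟨⟨h1, h2, h3, h4, h5, h6, h7, h8⟩, ?_⟩
      have : insert q.1 A ∪ fc L = A ∪ fc (q :: L) := by
        rw [fc_cons, Finset.insert_union, Finset.union_insert]
      rwa [this] at h9
    · rintro ⟨⟨h1, h2, h3, h4, h5, h6, h7, h8⟩, h9⟩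
      refine ⟨h1, h2, h3, h4, h5, h6, h7, h8, ?_⟩
      have : insert q.1 A ∪ fc L = A ∪ fc (q :: L) := by
        rw [fc_cons, Finset.insert_union, Finset.union_insert]
      rwa [this]

lemma RM_rg {A : Finset (Finset ℕ)} {L} (h : RM M d A L) :
    ∀ r ∈ rg L, r ∈ M.faces ∧ r.card = d := by
  induction L generalizing A with
  | nil => simp
  | cons q L ih =>
    obtain ⟨h1, h2, h3, h4, h5, h6, h7, h8⟩ := h
    intro r hr
    rw [rg_cons, Finset.mem_insert] at hr
    rcases hr with rfl | hr
    · exact ⟨h4, h5⟩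
    · exact ih h8 r hr

end RMLemmas


section Reroot

variable {M : SC} {d : ℕ}

lemma fc_exists {x : Finset ℕ} {L : List (Finset ℕ × Finset ℕ)} (h : x ∈ fc L) :
    ∃ p ∈ L, p.1 = x := by
  induction L with
  | nil => simp at h
  | cons q L ih =>
    rw [fc_cons, Finset.mem_insert] at h
    rcases h with rfl | h
    · exact ⟨q, List.mem_cons_self, rfl⟩
    · obtain ⟨p, hp, hpx⟩ := ih h
      exact ⟨p, List.mem_cons_of_mem q hp, hpx⟩

lemma reroot : ∀ (n : ℕ) (L : List (Finset ℕ × Finset ℕ)) (F F' : Finset ℕ),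
    L.length ≤ n → F ∈ M.faces → F.card = d + 1 →
    RM M d {F} L → F' ∈ insert F (fc L) →
    ∃ L', RM M d {F'} L' ∧ insert F' (fc L') = insert F (fc L) ∧ rg L' = rg L := by
  intro n
  induction n with
  | zero =>
    intro L F F' hlen _ _ hRM hF'
    have hnil : L = [] := List.eq_nil_of_length_eq_zero (Nat.le_zero.mp hlen)
    subst hnil
    simp only [fc_nil] at hF'
    rcases Finset.mem_insert.mp hF' with rfl | h
    · exact ⟨[], trivial, rfl, rfl⟩
    · exact absurd h (Finset.notMem_empty _)
  | succ n ih =>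
    intro L F F' hlen hFM hFc hRM hF'
    by_cases hFF : F' = F
    · subst hFF; exact ⟨L, hRM, rfl, rfl⟩
    rcases List.eq_nil_or_concat L with rfl | ⟨L₀, p, hLc⟩
    · simp only [fc_nil] at hF'
      rcases Finset.mem_insert.mp hF' with rfl | h
      · exact absurd rfl hFF
      · exact absurd h (Finset.notMem_empty _)
    rw [List.concat_eq_append] at hLc
    subst hLc
    have hlen₀ : L₀.length ≤ n := by
      simp only [List.length_append, List.length_cons, List.length_nil] at hlen
      omega
    obtain ⟨hRM₀, hRMp⟩ := RM_append.mp hRM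
    obtain ⟨hp1M, hp1c, hp1nin, hp2M, hp2c, hp21, ⟨H, hHmem, hp2H⟩, -⟩ := hRMp
    have hsingl : ({F} : Finset (Finset ℕ)) ∪ fc L₀ = insert F (fc L₀) :=
      (Finset.insert_eq _ _).symm
    have hfcL : fc (L₀ ++ [p]) = fc L₀ ∪ {p.1} := by
      rw [fc_append]; rfl
    by_cases hFG : F' = p.1
    · -- re-root at the last facet
      rw [hsingl] at hHmem hp1nin
      have hHM : H ∈ M.faces ∧ H.card = d + 1 := by
        rcases Finset.mem_insert.mp hHmem with rfl | hH
        · exact ⟨hFM, hFc⟩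
        · obtain ⟨q, hq, hq1⟩ := fc_exists hH
          have := RM_mem hRM₀ q hq
          rw [hq1] at this
          exact ⟨this.1, this.2.1⟩
      obtain ⟨L'', hRM'', hfc'', hrg''⟩ := ih L₀ F H hlen₀ hFM hFc hRM₀ hHmem
      have hp1H : p.1 ≠ H := by
        intro h; rw [h] at hp1nin; exact hp1nin hHmem
      have hp1nfc : p.1 ∉ fc L'' := by
        intro h
        have : p.1 ∈ insert H (fc L'') := Finset.mem_insert_of_mem h
        rw [hfc''] at this
        exact hp1nin this
      refine ⟨(H, p.2) :: L'', ?_, ?_, ?_⟩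
      · refine ⟨hHM.1, hHM.2, ?_, hp2M, hp2c, hp2H, ⟨F', Finset.mem_singleton_self F', by rw [hFG]; exact hp21⟩, ?_⟩
        · simp only [Finset.mem_singleton]
          rw [hFG]; exact fun h => hp1H h.symm
        · refine RM_mono ?_ ?_ hRM''
          · intro x hx
            rw [Finset.mem_singleton] at hx
            subst hx; exact Finset.mem_insert_self _ _
          · intro q hq
            simp only [Finset.mem_insert, Finset.mem_singleton]
            push_neg
            constructor
            · intro h
              exact RM_not_avail hRM'' q hq (by rw [h]; exact Finset.mem_singleton_self H)
            · intro h
              rw [hFG] at h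
              exact hp1nfc (h ▸ mem_fc hq)
      · rw [hfcL]
        show insert F' (insert H (fc L'')) = _
        rw [hfc'', hFG]
        ext x
        simp only [Finset.mem_insert, Finset.mem_union, Finset.mem_singleton]
        tauto
      · show insert p.2 (rg L'') = rg (L₀ ++ [p])
        rw [hrg'', rg_append]
        ext x
        simp only [Finset.mem_insert, Finset.mem_union, rg_cons, rg_nil,
          Finset.mem_singleton, Finset.notMem_empty, or_false]
        tauto
    · -- re-root inside the prefix
      have hF'₀ : F' ∈ insert F (fc L₀) := by
        rw [hfcL] at hF'
        rcases Finset.mem_insert.mp hF' with rfl | h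
        · exact absurd rfl hFF
        rcases Finset.mem_union.mp h with h | h
        · exact Finset.mem_insert_of_mem h
        · rw [Finset.mem_singleton] at h
          exact absurd h hFG
      obtain ⟨L'', hRM'', hfc'', hrg''⟩ := ih L₀ F F' hlen₀ hFM hFc hRM₀ hF'₀
      refine ⟨L'' ++ [p], ?_, ?_, ?_⟩
      · refine RM_append.mpr ⟨hRM'', ?_⟩
        have havail : ({F'} : Finset (Finset ℕ)) ∪ fc L'' = insert F (fc L₀) := by
          rw [← Finset.insert_eq, hfc'']
        refine ⟨hp1M, hp1c, ?_, hp2M, hp2c, hp21, ?_, trivial⟩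
        · rw [havail, ← hsingl]; exact hp1nin
        · exact ⟨H, by rw [havail, ← hsingl]; exact hHmem, hp2H⟩
      · rw [hfcL, fc_append]
        show insert F' (fc L'' ∪ fc [p]) = _
        have : fc [p] = {p.1} := rfl
        rw [this]
        have h1 : insert F' (fc L'' ∪ {p.1}) = insert F' (fc L'') ∪ {p.1} := by
          rw [Finset.insert_union]
        rw [h1, hfc'']
        rw [Finset.insert_union]
      · rw [rg_append, rg_append]
        show rg L'' ∪ rg [p] = _
        rw [hrg'']

end Reroot


section Burn

variable {M : SC} {d : ℕ}

def subSC (M : SC) (S : Finset (Finset ℕ)) (h1 : S ⊆ M.faces)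
    (h2 : ∀ s ∈ S, ∀ t ⊆ s, t.Nonempty → t ∈ S) : SC :=
  ⟨S, fun s hs => M.nonempty_mem s (h1 hs), h2⟩

lemma dc_AB (hpure : ∀ s ∈ M.faces, ∃ F ∈ M.faces, s ⊆ F ∧ F.card = d + 1)
    {A B : Finset (Finset ℕ)}
    (hA : ∀ a ∈ A, a.card = d + 1) (hB : InvB M d A B) :
    ∀ s ∈ (M.faces \ A) \ B, ∀ t ⊆ s, t.Nonempty → t ∈ (M.faces \ A) \ B := by
  intro s hs t hts htne
  simp only [Finset.mem_sdiff] at hs ⊢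
  obtain ⟨⟨hsM, hsA⟩, hsB⟩ := hs
  have htM := M.down_closed s hsM t hts htne
  by_cases hts' : t = s
  · subst hts'; exact ⟨⟨htM, hsA⟩, hsB⟩
  have hss : t ⊂ s := Finset.ssubset_iff_subset_ne.mpr ⟨hts, hts'⟩
  refine ⟨⟨htM, ?_⟩, ?_⟩
  · intro htA
    have h1 : t.card = d + 1 := hA t htA
    have h2 : s.card ≤ d + 1 := card_le_of_pure hpure hsM
    have h3 : t.card < s.card := Finset.card_lt_card hss
    omega
  · intro htB
    exact hsA ((hB t htB).2.2 s hsM hss)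

lemma burn (hpure : ∀ s ∈ M.faces, ∃ F ∈ M.faces, s ⊆ F ∧ F.card = d + 1)
    (hpm : ∀ r ∈ M.faces, r.card = d →
      (M.faces.filter fun G => G.card = d + 1 ∧ r ⊆ G).card = 2) :
    ∀ (L : List (Finset ℕ × Finset ℕ)) (A B : Finset (Finset ℕ)) (K K' : SC),
      RM M d A L → (∀ a ∈ A, a ∈ M.faces ∧ a.card = d + 1) → InvB M d A B →
      K.faces = (M.faces \ A) \ B →
      K'.faces = (M.faces \ (A ∪ fc L)) \ (B ∪ rg L) →
      K.CollapsesTo K' := by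
  intro L
  induction L with
  | nil =>
    intro A B K K' _ _ _ hK hK'
    have : K = K' := by
      apply scExt
      rw [hK, hK']
      simp
    rw [this]
    exact Relation.ReflTransGen.refl
  | cons p L ih =>
    intro A B K K' hRM hA hB hK hK'
    obtain ⟨hGM, hGc, hGA, hrM, hrc, hrG, ⟨H, hHA, hrH⟩, hRM'⟩ := hRM
    have hrGss : p.2 ⊂ p.1 := by
      refine Finset.ssubset_iff_subset_ne.mpr ⟨hrG, ?_⟩
      intro h
      rw [h] at hrc
      omega
    have hA' : ∀ a ∈ insert p.1 A, a ∈ M.faces ∧ a.card = d + 1 := by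
      intro a ha
      rcases Finset.mem_insert.mp ha with rfl | ha
      · exact ⟨hGM, hGc⟩
      · exact hA a ha
    have hB' : InvB M d (insert p.1 A) (insert p.2 B) := by
      intro r hr
      rcases Finset.mem_insert.mp hr with rfl | hr
      · refine ⟨hrM, hrc, ?_⟩
        intro X hX hss
        have hXc : X.card = d + 1 := coface_card hpure hrc hX hss
        have hHne : p.1 ≠ H := fun h => hGA (h ▸ hHA)
        rcases two_facets hpm hrM hrc hGM hGc hrG (hA H hHA).1 (hA H hHA).2 hrH
            hHne hX hXc hss.subset with rfl | rfl
        · exact Finset.mem_insert_self _ _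
        · exact Finset.mem_insert_of_mem hHA
      · obtain ⟨h1, h2, h3⟩ := hB r hr
        exact ⟨h1, h2, fun X hX hss => Finset.mem_insert_of_mem (h3 X hX hss)⟩
    have hsub : (M.faces \ (insert p.1 A)) \ (insert p.2 B) ⊆ M.faces :=
      (Finset.sdiff_subset).trans Finset.sdiff_subset
    set K₁ : SC := subSC M ((M.faces \ (insert p.1 A)) \ (insert p.2 B)) hsub
      (dc_AB hpure (fun a ha => (hA' a ha).2) hB') with hK₁def
    have hK₁ : K₁.faces = (M.faces \ (insert p.1 A)) \ (insert p.2 B) := rfl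
    have hrK : p.2 ∈ K.faces := by
      rw [hK]
      simp only [Finset.mem_sdiff]
      refine ⟨⟨hrM, ?_⟩, ?_⟩
      · intro h
        have := (hA _ h).2
        omega
      · intro h
        exact hGA ((hB _ h).2.2 p.1 hGM hrGss)
    have hGK : p.1 ∈ K.faces := by
      rw [hK]
      simp only [Finset.mem_sdiff]
      refine ⟨⟨hGM, hGA⟩, ?_⟩
      intro h
      have := (hB _ h).2.1
      omega
    have hstep : K.ElemCollapse K₁ := by
      refine ⟨p.2, p.1, hrK, hGK, hrGss, ?_, ?_⟩
      · intro X hX hss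
        rw [hK] at hX
        simp only [Finset.mem_sdiff] at hX
        have hXc : X.card = d + 1 := coface_card hpure hrc hX.1.1 hss
        have hHne : p.1 ≠ H := fun h => hGA (h ▸ hHA)
        rcases two_facets hpm hrM hrc hGM hGc hrG (hA H hHA).1 (hA H hHA).2 hrH
            hHne hX.1.1 hXc hss.subset with rfl | rfl
        · rfl
        · exact absurd hHA hX.1.2
      · rw [hK₁, hK]
        ext x
        simp only [Finset.mem_sdiff, Finset.mem_erase, Finset.mem_insert]
        push_neg
        tauto
    have hrec : K₁.CollapsesTo K' := by
      refine ih (insert p.1 A) (insert p.2 B) K₁ K' hRM' hA' hB' hK₁ ?_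
      rw [hK']
      ext x
      simp only [Finset.mem_sdiff, Finset.mem_union, Finset.mem_insert, fc_cons, rg_cons]
      tauto
    exact Relation.ReflTransGen.head hstep hrec

end Burn


section Extract

variable {M : SC} {d : ℕ}

lemma extract (hpure : ∀ s ∈ M.faces, ∃ F ∈ M.faces, s ⊆ F ∧ F.card = d + 1)
    (hpm : ∀ r ∈ M.faces, r.card = d →
      (M.faces.filter fun G => G.card = d + 1 ∧ r ⊆ G).card = 2)
    (hd : 1 ≤ d) :
    ∀ (K : SC) (v : ℕ), K.CollapsesTo (pointSC v) →
    ∀ (A B C : Finset (Finset ℕ)),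
      (∀ a ∈ A, a ∈ M.faces ∧ a.card = d + 1) → InvB M d A B →
      (∀ c ∈ C, c.card ≤ d) →
      K.faces = ((M.faces \ A) \ B) \ C →
      ∃ (L : List (Finset ℕ × Finset ℕ)) (K₂ : SC),
        RM M d A L ∧
        A ∪ fc L = M.faces.filter (fun X => X.card = d + 1) ∧
        rg L ⊆ K.faces ∧
        K₂.faces = ((M.faces \ M.faces.filter (fun X => X.card = d + 1)) \ (B ∪ rg L)) \ C ∧
        K₂.CollapsesTo (pointSC v) := by
  intro K v h
  induction h using Relation.ReflTransGen.head_induction_on with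
  | refl =>
    intro A B C hA hB hC hK
    have hAF : A = M.faces.filter (fun X => X.card = d + 1) := by
      apply Finset.Subset.antisymm
      · intro a ha
        exact Finset.mem_filter.mpr ⟨(hA a ha).1, (hA a ha).2⟩
      · intro G hG
        obtain ⟨hGM, hGc⟩ := Finset.mem_filter.mp hG
        by_contra hGA
        have hGB : G ∉ B := by
          intro h; have := (hB G h).2.1; omega
        have hGC : G ∉ C := by
          intro h; have := hC G h; omega
        have : G ∈ (pointSC v).faces := by
          rw [hK]
          simp only [Finset.mem_sdiff]
          exact ⟨⟨⟨hGM, hGA⟩, hGB⟩, hGC⟩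
        have : G = {v} := by simpa [pointSC] using this
        rw [this] at hGc
        simp at hGc
        omega
    refine ⟨[], pointSC v, trivial, by simp [hAF], by simp, ?_, Relation.ReflTransGen.refl⟩
    rw [rg_nil, Finset.union_empty, ← hAF]
    exact hK
  | head hstep htail ih =>
    clear K
    rename_i K K₁
    intro A B C hA hB hC hK
    obtain ⟨f, G, hfK, hGK, hss, huniq, hK₁⟩ := hstep
    have hcard : G.card = f.card + 1 := elem_card hfK hGK hss huniq
    have hKsub : K.faces ⊆ M.faces := by
      rw [hK]
      exact Finset.sdiff_subset.trans (Finset.sdiff_subset.trans Finset.sdiff_subset)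
    have hfM : f ∈ M.faces := hKsub hfK
    have hGM : G ∈ M.faces := hKsub hGK
    have hfparts : f ∉ A ∧ f ∉ B ∧ f ∉ C := by
      rw [hK] at hfK
      simp only [Finset.mem_sdiff] at hfK
      tauto
    have hGparts : G ∉ A ∧ G ∉ B ∧ G ∉ C := by
      rw [hK] at hGK
      simp only [Finset.mem_sdiff] at hGK
      tauto
    have hGle : G.card ≤ d + 1 := card_le_of_pure hpure hGM
    have hfnK₁ : f ∉ K₁.faces := by
      rw [hK₁]
      simp
    have hGnK₁ : G ∉ K₁.faces := by
      rw [hK₁]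
      simp [Finset.mem_erase]
    have hK₁sub : K₁.faces ⊆ K.faces := by
      rw [hK₁]
      exact (Finset.erase_subset _ _).trans (Finset.erase_subset _ _)
    by_cases htop : G.card = d + 1
    · -- top-dimensional pair
      have hfc : f.card = d := by omega
      obtain ⟨H, hHM, hHc, hfH, hHG⟩ := other_facet hpm hfM hfc hGM htop hss.subset
      have hfssH : f ⊂ H := by
        refine Finset.ssubset_iff_subset_ne.mpr ⟨hfH, ?_⟩
        intro hEq; rw [hEq] at hfc; omega
      have hHnK : H ∉ K.faces := by
        intro hHK
        exact hHG (huniq H hHK hfssH)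
      have hHA : H ∈ A := by
        by_contra hHA
        apply hHnK
        rw [hK]
        simp only [Finset.mem_sdiff]
        refine ⟨⟨⟨hHM, hHA⟩, ?_⟩, ?_⟩
        · intro h; have := (hB H h).2.1; omega
        · intro h; have := hC H h; omega
      have hGH : G ≠ H := fun h => hHnK (h ▸ hGK)
      have hA' : ∀ a ∈ insert G A, a ∈ M.faces ∧ a.card = d + 1 := by
        intro a ha
        rcases Finset.mem_insert.mp ha with rfl | ha
        · exact ⟨hGM, htop⟩
        · exact hA a ha
      have hB' : InvB M d (insert G A) (insert f B) := by
        intro r hr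
        rcases Finset.mem_insert.mp hr with rfl | hr
        · refine ⟨hfM, hfc, ?_⟩
          intro X hX hssX
          have hXc : X.card = d + 1 := coface_card hpure hfc hX hssX
          rcases two_facets hpm hfM hfc hGM htop hss.subset hHM hHc hfH hGH
              hX hXc hssX.subset with rfl | rfl
          · exact Finset.mem_insert_self _ _
          · exact Finset.mem_insert_of_mem hHA
        · obtain ⟨h1, h2, h3⟩ := hB r hr
          exact ⟨h1, h2, fun X hX hssX => Finset.mem_insert_of_mem (h3 X hX hssX)⟩
      have hK₁faces : K₁.faces = ((M.faces \ insert G A) \ insert f B) \ C := by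
        rw [hK₁, hK]
        ext x
        simp only [Finset.mem_erase, Finset.mem_sdiff, Finset.mem_insert]
        push_neg
        tauto
      obtain ⟨L, K₂, hRM, hcov, hrgsub, hK₂, hK₂col⟩ :=
        ih (insert G A) (insert f B) C hA' hB' hC hK₁faces
      refine ⟨(G, f) :: L, K₂, ?_, ?_, ?_, ?_, hK₂col⟩
      · exact ⟨hGM, htop, hGparts.1, hfM, hfc, hss.subset, ⟨H, hHA, hfH⟩, hRM⟩
      · rw [← hcov]
        ext x
        simp only [fc_cons, Finset.mem_union, Finset.mem_insert]
        tauto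
      · intro r hr
        rw [rg_cons, Finset.mem_insert] at hr
        rcases hr with rfl | hr
        · exact hfK
        · exact hK₁sub (hrgsub hr)
      · rw [hK₂]
        ext x
        simp only [Finset.mem_sdiff, Finset.mem_union, Finset.mem_insert, rg_cons]
        tauto
    · -- lower-dimensional pair
      have hGled : G.card ≤ d := by omega
      have hC' : ∀ c ∈ insert f (insert G C), c.card ≤ d := by
        intro c hc
        rcases Finset.mem_insert.mp hc with rfl | hc
        · omega
        rcases Finset.mem_insert.mp hc with rfl | hc
        · exact hGled
        · exact hC c hc
      have hK₁faces : K₁.faces = ((M.faces \ A) \ B) \ insert f (insert G C) := by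
        rw [hK₁, hK]
        ext x
        simp only [Finset.mem_erase, Finset.mem_sdiff, Finset.mem_insert]
        push_neg
        tauto
      obtain ⟨L, K₂, hRM, hcov, hrgsub, hK₂, hK₂col⟩ :=
        ih A B (insert f (insert G C)) hA hB hC' hK₁faces
      have hrgK : rg L ⊆ K.faces := fun r hr => hK₁sub (hrgsub hr)
      -- the intermediate complex before performing this lower collapse
      have hsub'' : (K.faces \ M.faces.filter (fun X => X.card = d + 1)) \ rg L ⊆ M.faces :=
        (Finset.sdiff_subset.trans Finset.sdiff_subset).trans hKsub
      have hdc'' : ∀ s ∈ (K.faces \ M.faces.filter (fun X => X.card = d + 1)) \ rg L,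
          ∀ t ⊆ s, t.Nonempty → t ∈ (K.faces \ M.faces.filter (fun X => X.card = d + 1)) \ rg L := by
        intro s hs t hts htne
        simp only [Finset.mem_sdiff, Finset.mem_filter] at hs ⊢
        obtain ⟨⟨hsK, hsF⟩, hsR⟩ := hs
        have htK := K.down_closed s hsK t hts htne
        have hsM : s ∈ M.faces := hKsub hsK
        have htM : t ∈ M.faces := hKsub htK
        by_cases hts' : t = s
        · subst hts'; exact ⟨⟨htK, hsF⟩, hsR⟩
        have hss' : t ⊂ s := Finset.ssubset_iff_subset_ne.mpr ⟨hts, hts'⟩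
        refine ⟨⟨htK, ?_⟩, ?_⟩
        · rintro ⟨-, htc⟩
          have h1 : s.card ≤ d + 1 := card_le_of_pure hpure hsM
          have h2 : t.card < s.card := Finset.card_lt_card hss'
          omega
        · intro htR
          obtain ⟨htM', htc⟩ := RM_rg hRM t htR
          have : s.card = d + 1 := coface_card hpure htc hsM hss'
          exact hsF ⟨hsM, this⟩
      set K₂'' : SC := subSC M _ hsub'' hdc'' with hK₂''def
      have hK₂''faces : K₂''.faces =
          ((M.faces \ M.faces.filter (fun X => X.card = d + 1)) \ (B ∪ rg L)) \ C := by
        show (K.faces \ M.faces.filter (fun X => X.card = d + 1)) \ rg L = _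
        rw [hK]
        ext x
        simp only [Finset.mem_sdiff, Finset.mem_union, Finset.mem_filter]
        constructor
        · rintro ⟨⟨⟨⟨⟨hxM, hxA⟩, hxB⟩, hxC⟩, hxF⟩, hxR⟩
          exact ⟨⟨⟨hxM, hxF⟩, fun h => h.elim hxB hxR⟩, hxC⟩
        · rintro ⟨⟨⟨hxM, hxF⟩, hxBR⟩, hxC⟩
          refine ⟨⟨⟨⟨⟨hxM, ?_⟩, fun h => hxBR (Or.inl h)⟩, hxC⟩, hxF⟩,
            fun h => hxBR (Or.inr h)⟩
          intro hxA
          exact hxF ⟨(hA x hxA).1, (hA x hxA).2⟩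
      have hfK₂'' : f ∈ K₂''.faces := by
        show f ∈ (K.faces \ _) \ _
        simp only [Finset.mem_sdiff, Finset.mem_filter]
        refine ⟨⟨hfK, ?_⟩, ?_⟩
        · rintro ⟨-, hfcard⟩; omega
        · intro h; exact hfnK₁ (hrgsub h)
      have hGK₂'' : G ∈ K₂''.faces := by
        show G ∈ (K.faces \ _) \ _
        simp only [Finset.mem_sdiff, Finset.mem_filter]
        refine ⟨⟨hGK, ?_⟩, ?_⟩
        · rintro ⟨-, hGcard⟩; omega
        · intro h; exact hGnK₁ (hrgsub h)
      have hK₂''sub : K₂''.faces ⊆ K.faces := by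
        show (K.faces \ _) \ _ ⊆ _
        exact Finset.sdiff_subset.trans Finset.sdiff_subset
      have hstep'' : K₂''.ElemCollapse K₂ := by
        refine ⟨f, G, hfK₂'', hGK₂'', hss, ?_, ?_⟩
        · intro X hX hssX
          exact huniq X (hK₂''sub hX) hssX
        · rw [hK₂, hK₂''faces]
          ext x
          simp only [Finset.mem_erase, Finset.mem_sdiff, Finset.mem_insert]
          push_neg
          tauto
      exact ⟨L, K₂'', hRM, hcov, hrgK, hK₂''faces,
        Relation.ReflTransGen.head hstep'' hK₂col⟩

end Extract


lemma no_collapse_small {K L : SC} (hsmall : ∀ s ∈ K.faces, s.card ≤ 1)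
    (h : K.CollapsesTo L) : K = L := by
  rcases Relation.ReflTransGen.cases_head h with rfl | ⟨K₁, hstep, -⟩
  · rfl
  · obtain ⟨f, G, hf, hG, hss, -, -⟩ := hstep
    have h1 := hsmall G hG
    have h2 : f.Nonempty := K.nonempty_mem f hf
    have h3 := Finset.card_lt_card hss
    have h4 := Finset.card_pos.mpr h2
    omega

lemma main_imp (d : ℕ) (M : SC)
    (hpure : ∀ s ∈ M.faces, ∃ F ∈ M.faces, s ⊆ F ∧ F.card = d + 1)
    (hpm : ∀ r ∈ M.faces, r.card = d →
      (M.faces.filter fun G => G.card = d + 1 ∧ r ⊆ G).card = 2)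
    (F F' : Finset ℕ) (hF : F ∈ M.faces) (hFcard : F.card = d + 1)
    (hF' : F' ∈ M.faces) (hF'card : F'.card = d + 1)
    (M' M'' : SC) (hM' : M'.faces = M.faces.erase F)
    (hM'' : M''.faces = M.faces.erase F') :
    M'.Collapsible → M''.Collapsible := by
  rintro ⟨v, hcol⟩
  rcases Nat.eq_zero_or_pos d with hd0 | hd
  · -- degenerate case d = 0: no collapse is possible at all
    subst hd0
    have hsmall : ∀ s ∈ M'.faces, s.card ≤ 1 := by
      intro s hs
      rw [hM'] at hs
      exact card_le_of_pure hpure (Finset.mem_of_mem_erase hs)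
    have hMpt : M' = pointSC v := no_collapse_small hsmall hcol
    have hfaces : M.faces.erase F = {{v}} := by
      rw [← hM', hMpt]; rfl
    by_cases hFF : F' = F
    · subst hFF
      refine ⟨v, ?_⟩
      have : M'' = pointSC v := scExt (by rw [hM'', hfaces]; rfl)
      rw [this]
      exact Relation.ReflTransGen.refl
    · have hF'v : F' = {v} := by
        have : F' ∈ M.faces.erase F := Finset.mem_erase.mpr ⟨hFF, hF'⟩
        rw [hfaces] at this
        simpa using this
      obtain ⟨u, hu⟩ := Finset.card_eq_one.mp hFcard
      have hMall : M.faces = insert F {{v}} := by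
        rw [← Finset.insert_erase hF, hfaces]
      have hM''faces : M''.faces = {F} := by
        rw [hM'', hMall, hF'v]
        ext x
        simp only [Finset.mem_erase, Finset.mem_insert, Finset.mem_singleton]
        constructor
        · rintro ⟨hne, h | h⟩
          · exact h
          · exact absurd h hne
        · rintro rfl
          refine ⟨?_, Or.inl rfl⟩
          intro h
          exact hFF (by rw [hF'v, ← h])
      refine ⟨u, ?_⟩
      have : M'' = pointSC u := scExt (by rw [hM''faces, hu]; rfl)
      rw [this]
      exact Relation.ReflTransGen.refl
  · -- main case d ≥ 1
    have hA1 : ∀ a ∈ ({F} : Finset (Finset ℕ)), a ∈ M.faces ∧ a.card = d + 1 := by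
      intro a ha
      rw [Finset.mem_singleton] at ha
      subst ha
      exact ⟨hF, hFcard⟩
    have hB1 : InvB M d {F} ∅ := by
      intro r hr
      exact absurd hr (Finset.notMem_empty r)
    have hM'faces : M'.faces = ((M.faces \ {F}) \ ∅) \ ∅ := by
      rw [hM', Finset.sdiff_empty, Finset.sdiff_empty, Finset.erase_eq]
    obtain ⟨L, K₂, hRM, hcov, -, hK₂, hK₂col⟩ :=
      extract hpure hpm hd M' v hcol {F} ∅ ∅ hA1 hB1 (by simp) hM'faces
    have hcov' : insert F (fc L) = M.faces.filter (fun X => X.card = d + 1) := by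
      rw [Finset.insert_eq]
      exact hcov
    have hF'mem : F' ∈ insert F (fc L) := by
      rw [hcov']
      exact Finset.mem_filter.mpr ⟨hF', hF'card⟩
    obtain ⟨L', hRM', hfc', hrg'⟩ :=
      reroot L.length L F F' le_rfl hF hFcard hRM hF'mem
    have hA2 : ∀ a ∈ ({F'} : Finset (Finset ℕ)), a ∈ M.faces ∧ a.card = d + 1 := by
      intro a ha
      rw [Finset.mem_singleton] at ha
      subst ha
      exact ⟨hF', hF'card⟩
    have hB2 : InvB M d {F'} ∅ := by
      intro r hr
      exact absurd hr (Finset.notMem_empty r)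
    have hM''faces : M''.faces = (M.faces \ {F'}) \ ∅ := by
      rw [hM'', Finset.sdiff_empty, Finset.erase_eq]
    have hK₂' : K₂.faces = (M.faces \ ({F'} ∪ fc L')) \ (∅ ∪ rg L') := by
      have h1 : ({F'} : Finset (Finset ℕ)) ∪ fc L' = insert F' (fc L') :=
        (Finset.insert_eq _ _).symm
      rw [h1, hfc', hcov', hrg', hK₂, Finset.sdiff_empty]
    have hburn : M''.CollapsesTo K₂ :=
      burn hpure hpm L' {F'} ∅ M'' K₂ hRM' hA2 hB2 hM''faces hK₂'
    exact ⟨v, Relation.ReflTransGen.trans hburn hK₂col⟩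

end PMAux






/-- For a closed simplicial d-pseudomanifold M and any two facets F and F',
the complex M - F is collapsible if and only if M - F' is collapsible. -/
theorem collapsible_independent_of_removed_facet (d : ℕ) (M : SC)
    (hpure : ∀ s ∈ M.faces, ∃ F ∈ M.faces, s ⊆ F ∧ F.card = d + 1)
    (hpm : ∀ r ∈ M.faces, r.card = d →
      (M.faces.filter fun G => G.card = d + 1 ∧ r ⊆ G).card = 2)
    (hconn : (dualGraph M d).Connected)
    (F F' : Finset ℕ) (hF : F ∈ M.faces) (hFcard : F.card = d + 1)
    (hF' : F' ∈ M.faces) (hF'card : F'.card = d + 1)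
    (M' M'' : SC) (hM' : M'.faces = M.faces.erase F)
    (hM'' : M''.faces = M.faces.erase F') :
    M'.Collapsible ↔ M''.Collapsible := by
  constructor
  · exact PMAux.main_imp d M hpure hpm F F' hF hFcard hF' hF'card M' M'' hM' hM''
  · exact PMAux.main_imp d M hpure hpm F' F hF' hF'card hF hFcard M'' M' hM'' hM'
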